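/- Let m^{αβ} = η^{αβ} + λ u^α u^β with λ < 1 and u = ∂_t in Minkowski space, and let A_α solve the system Box_γ A_β - γ^{σρ} ∂_β ∂_σ A_ρ - μ² A_σ m^{σρ} γ_{ρβ} = 0 (the dielectric Proca equation with constant n, inertial u). Then applying m^{βα}∂_α and using the divergence constraint ∂_α(m^{αβ} A_β) = 0 yields the scalar wave equation Box_m (∂₀ A₀) = μ² n^{-2} (1 - λ) ∂₀ A₀. -/

import Mathlib

noncomputable section

/-- Partial derivative `∂_i f`. -/
def pd (i : Fin 4) (f : (Fin 4 → ℝ) → ℝ) : (Fin 4 → ℝ) → ℝ :=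
  fun x => fderiv ℝ f x (Pi.single i 1)

/-- The Gordon metric `γ^{αβ}`: diag(-n², 1, 1, 1). -/
def gamUp (n : ℝ) : Fin 4 → Fin 4 → ℝ :=
  fun a b => if a = b then (if a = 0 then -n ^ 2 else 1) else 0

/-- The lowered Gordon metric `γ_{αβ}`: diag(-n⁻², 1, 1, 1). -/
def gamLow (n : ℝ) : Fin 4 → Fin 4 → ℝ :=
  fun a b => if a = b then (if a = 0 then -(n ^ 2)⁻¹ else 1) else 0

/-- `m^{αβ} = η^{αβ} + λ u^α u^β`: diag(λ-1, 1, 1, 1). -/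
def mUp (lam : ℝ) : Fin 4 → Fin 4 → ℝ :=
  fun a b => if a = b then (if a = 0 then lam - 1 else 1) else 0

/-- The wave operator `c^{αβ} ∂_α ∂_β`. -/
def Box (c : Fin 4 → Fin 4 → ℝ) (f : (Fin 4 → ℝ) → ℝ) : (Fin 4 → ℝ) → ℝ :=
  fun x => ∑ a : Fin 4, ∑ b : Fin 4, c a b * pd a (pd b f) x

lemma contDiff_pd {f : (Fin 4 → ℝ) → ℝ} (hf : ContDiff ℝ (⊤ : ℕ∞) f) (a : Fin 4) :
    ContDiff ℝ (⊤ : ℕ∞) (pd a f) :=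
  (hf.fderiv_right (by simp)).clm_apply contDiff_const

lemma pd_comm {f : (Fin 4 → ℝ) → ℝ} (hf : ContDiff ℝ (⊤ : ℕ∞) f) (a b : Fin 4)
    (x : Fin 4 → ℝ) : pd a (pd b f) x = pd b (pd a f) x := by
  have hd : Differentiable ℝ (fderiv ℝ f) :=
    (hf.fderiv_right (m := (⊤ : ℕ∞)) (by simp)).differentiable (by simp)
  have hsymm : IsSymmSndFDerivAt ℝ f x :=
    (hf.contDiffAt).isSymmSndFDerivAt (by rw [minSmoothness_of_isRCLikeNormedField]; exact WithTop.coe_le_coe.mpr (le_top : (2 : ℕ∞) ≤ ⊤))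
  unfold pd
  have h1 : fderiv ℝ (fun z => fderiv ℝ f z (Pi.single b 1)) x (Pi.single a 1)
      = fderiv ℝ (fderiv ℝ f) x (Pi.single a 1) (Pi.single b 1) := by
    rw [fderiv_clm_apply (hd x) (differentiableAt_const _)]; simp
  have h2 : fderiv ℝ (fun z => fderiv ℝ f z (Pi.single a 1)) x (Pi.single b 1)
      = fderiv ℝ (fderiv ℝ f) x (Pi.single b 1) (Pi.single a 1) := by
    rw [fderiv_clm_apply (hd x) (differentiableAt_const _)]; simp
  rw [h1, h2]
  exact hsymm _ _

lemma pd_lin (c1 : ℝ) {f1 f2 f3 f4 : (Fin 4 → ℝ) → ℝ}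
    (h1 : Differentiable ℝ f1) (h2 : Differentiable ℝ f2)
    (h3 : Differentiable ℝ f3) (h4 : Differentiable ℝ f4)
    (a : Fin 4) (x : Fin 4 → ℝ) :
    pd a (fun y => c1 * f1 y + f2 y + f3 y + f4 y) x
      = c1 * pd a f1 x + pd a f2 x + pd a f3 x + pd a f4 x := by
  unfold pd
  rw [fderiv_fun_add (f := fun y => c1 * f1 y + f2 y + f3 y) ((((h1.const_mul c1).add h2).add h3) x) (h4 x),
    fderiv_fun_add (f := fun y => c1 * f1 y + f2 y) ((((h1.const_mul c1).add h2)) x) (h3 x),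
    fderiv_fun_add ((h1.const_mul c1) x) (h2 x),
    fderiv_const_mul (h1 x)]
  simp

lemma pd_const_mul {f : (Fin 4 → ℝ) → ℝ} (hf : Differentiable ℝ f) (c : ℝ)
    (a : Fin 4) (x : Fin 4 → ℝ) : pd a (fun y => c * f y) x = c * pd a f x := by
  unfold pd
  rw [fderiv_const_mul (hf x)]
  simp

/-- if `A` solves the dielectric Proca system
`Box_γ A_β - γ^{σρ} ∂_β ∂_σ A_ρ - μ² A_σ m^{σρ} γ_{ρβ} = 0` together with the
divergence constraint `∂_α(m^{αβ} A_β) = 0`, then the scalar `∂₀ A₀` satisfies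
`Box_m (∂₀ A₀) = μ² n⁻² (1 - λ) ∂₀ A₀`. -/
theorem scalar_wave_equation_for_dt_A0
    (lam μ n : ℝ) (hn : 0 < n) (hlam : lam < 1)
    (A : (Fin 4 → ℝ) → Fin 4 → ℝ)
    (hA : ∀ a : Fin 4, ContDiff ℝ (⊤ : ℕ∞) (fun x => A x a))
    (hfield : ∀ (b : Fin 4) (x : Fin 4 → ℝ),
      Box (gamUp n) (fun y => A y b) x
        - (∑ σ : Fin 4, ∑ ρ : Fin 4, gamUp n σ ρ * pd b (pd σ (fun y => A y ρ)) x)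
        - μ ^ 2 * (∑ σ : Fin 4, ∑ ρ : Fin 4, A x σ * mUp lam σ ρ * gamLow n ρ b) = 0)
    (hconstraint : ∀ x : Fin 4 → ℝ,
      (∑ a : Fin 4, ∑ b : Fin 4, mUp lam a b * pd a (fun y => A y b) x) = 0) :
    ∀ x : Fin 4 → ℝ,
      Box (mUp lam) (pd 0 (fun y => A y 0)) x
        = μ ^ 2 * (n ^ 2)⁻¹ * (1 - lam) * pd 0 (fun y => A y 0) x := by
  intro x
  -- differentiability facts
  have hD1 : ∀ b a : Fin 4, Differentiable ℝ (pd a (fun y => A y b)) :=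
    fun b a => (contDiff_pd (hA b) a).differentiable (by simp)
  have hD2 : ∀ b a c : Fin 4, Differentiable ℝ (pd c (pd a (fun y => A y b))) :=
    fun b a c => (contDiff_pd (contDiff_pd (hA b) a) c).differentiable (by simp)
  -- simplified constraint
  have hcon : ∀ y : Fin 4 → ℝ,
      (lam - 1) * pd 0 (fun z => A z 0) y + pd 1 (fun z => A z 1) y
        + pd 2 (fun z => A z 2) y + pd 3 (fun z => A z 3) y = 0 := by
    intro y
    have := hconstraint y
    simp [mUp, Fin.sum_univ_four] at this
    linarith
  -- simplified field equation at b = 0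
  have hf0 : ∀ y : Fin 4 → ℝ,
      (pd 1 (pd 1 (fun z => A z 0)) y + pd 2 (pd 2 (fun z => A z 0)) y
        + pd 3 (pd 3 (fun z => A z 0)) y)
      - (pd 0 (pd 1 (fun z => A z 1)) y + pd 0 (pd 2 (fun z => A z 2)) y
        + pd 0 (pd 3 (fun z => A z 3)) y)
      + μ ^ 2 * (lam - 1) * (n ^ 2)⁻¹ * A y 0 = 0 := by
    intro y
    have := hfield 0 y
    simp [Box, gamUp, gamLow, mUp, Fin.sum_univ_four] at this
    ring_nf at this ⊢
    linarith
  -- derivative of the constraint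
  have hconD : ∀ y : Fin 4 → ℝ,
      (lam - 1) * pd 0 (pd 0 (fun z => A z 0)) y + pd 0 (pd 1 (fun z => A z 1)) y
        + pd 0 (pd 2 (fun z => A z 2)) y + pd 0 (pd 3 (fun z => A z 3)) y = 0 := by
    intro y
    have hHeq : (fun z => (lam - 1) * pd 0 (fun w => A w 0) z + pd 1 (fun w => A w 1) z
        + pd 2 (fun w => A w 2) z + pd 3 (fun w => A w 3) z) = (fun _ => (0:ℝ)) :=
      funext fun z => hcon z
    calc (lam - 1) * pd 0 (pd 0 (fun z => A z 0)) y + pd 0 (pd 1 (fun z => A z 1)) y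
        + pd 0 (pd 2 (fun z => A z 2)) y + pd 0 (pd 3 (fun z => A z 3)) y
        = pd 0 (fun z => (lam - 1) * pd 0 (fun w => A w 0) z + pd 1 (fun w => A w 1) z
            + pd 2 (fun w => A w 2) z + pd 3 (fun w => A w 3) z) y :=
          (pd_lin (lam - 1) (hD1 0 0) (hD1 1 1) (hD1 2 2) (hD1 3 3) 0 y).symm
      _ = pd 0 (fun _ => (0:ℝ)) y := by rw [hHeq]
      _ = 0 := by simp [pd]
  -- the wave equation for A₀
  have hbox : ∀ y : Fin 4 → ℝ,
      (lam - 1) * pd 0 (pd 0 (fun z => A z 0)) y + pd 1 (pd 1 (fun z => A z 0)) y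
        + pd 2 (pd 2 (fun z => A z 0)) y + pd 3 (pd 3 (fun z => A z 0)) y
      = (μ ^ 2 * (n ^ 2)⁻¹ * (1 - lam)) * A y 0 := by
    intro y
    have h1 := hf0 y
    have h2 := hconD y
    nlinarith [h1, h2]
  have hboxEq : (fun y => (lam - 1) * pd 0 (pd 0 (fun z => A z 0)) y
      + pd 1 (pd 1 (fun z => A z 0)) y + pd 2 (pd 2 (fun z => A z 0)) y
      + pd 3 (pd 3 (fun z => A z 0)) y)
      = (fun y => (μ ^ 2 * (n ^ 2)⁻¹ * (1 - lam)) * A y 0) := funext hbox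
  -- differentiate the wave equation
  have hkey : (lam - 1) * pd 0 (pd 0 (pd 0 (fun z => A z 0))) x
      + pd 0 (pd 1 (pd 1 (fun z => A z 0))) x + pd 0 (pd 2 (pd 2 (fun z => A z 0))) x
      + pd 0 (pd 3 (pd 3 (fun z => A z 0))) x
      = (μ ^ 2 * (n ^ 2)⁻¹ * (1 - lam)) * pd 0 (fun z => A z 0) x := by
    calc (lam - 1) * pd 0 (pd 0 (pd 0 (fun z => A z 0))) x
        + pd 0 (pd 1 (pd 1 (fun z => A z 0))) x + pd 0 (pd 2 (pd 2 (fun z => A z 0))) x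
        + pd 0 (pd 3 (pd 3 (fun z => A z 0))) x
        = pd 0 (fun y => (lam - 1) * pd 0 (pd 0 (fun z => A z 0)) y
            + pd 1 (pd 1 (fun z => A z 0)) y + pd 2 (pd 2 (fun z => A z 0)) y
            + pd 3 (pd 3 (fun z => A z 0)) y) x :=
          (pd_lin (lam - 1) (hD2 0 0 0) (hD2 0 1 1) (hD2 0 2 2) (hD2 0 3 3) 0 x).symm
      _ = pd 0 (fun y => (μ ^ 2 * (n ^ 2)⁻¹ * (1 - lam)) * A y 0) x := by rw [hboxEq]
      _ = (μ ^ 2 * (n ^ 2)⁻¹ * (1 - lam)) * pd 0 (fun z => A z 0) x :=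
          pd_const_mul ((hA 0).differentiable (by simp)) _ 0 x
  -- commute derivatives
  have hc : ∀ i : Fin 4, pd 0 (pd i (pd i (fun z => A z 0))) x
      = pd i (pd i (pd 0 (fun z => A z 0))) x := by
    intro i
    have c1 : pd 0 (pd i (pd i (fun z => A z 0))) x
        = pd i (pd 0 (pd i (fun z => A z 0))) x :=
      pd_comm (contDiff_pd (hA 0) i) 0 i x
    have c2 : pd 0 (pd i (fun z => A z 0)) = pd i (pd 0 (fun z => A z 0)) :=
      funext (pd_comm (hA 0) 0 i)
    rw [c1, c2]
  rw [hc 1, hc 2, hc 3] at hkey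
  simp [Box, mUp, Fin.sum_univ_four]
  linarith [hkey]
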